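/- arXiv:1105.6210 — 2 statements merged into one kernel-verified Lean document; each statement's English description precedes it below -/
import Mathlib

section
/- If there exists a parametric subtrace 𝒯'' of 𝒯 that is simulable in 𝒯', then 𝒯' is a derivation field for 𝒯: the composition of the subtrace projection (a derivation) with the simulation-induced total derivation is a derivation from Pref(𝒯) to Pref(𝒯'). -/
/-!
Deleting the events outside `R'` is a derivation: the `i`-th prefix of the projected trace is
the projection of the prefix of the original trace that stops just before its `(i+1)`-st
event in `R'`, and these prefixes increase with `i`. The simulation map acts letterwise on
events, so it commutes with taking prefixes and preserves lengths; composing with it therefore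
keeps the same chain of witnesses. The simulation condition turns every projected run, whose
actions all lie in `R'`, into a run of `𝒯'`.
-/

def IsRun {P V R : Type*} (T : R → (P → V) → (P → V)) :
    (P → V) → List (R × (P → V)) → Prop
  | _, [] => True
  | s, (r, s') :: rest => T r s = s' ∧ IsRun T s' rest

def Traces {P V R : Type*} (T : R → (P → V) → (P → V)) (S0 : Set (P → V)) :
    Set ((P → V) × List (R × (P → V))) :=
  {t | t.1 ∈ S0 ∧ IsRun T t.1 t.2}

def IsRunRel {S R : Type*} (T : S → R → S → Prop) :
    S → List (R × S) → Prop
  | _, [] => True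
  | s, (r, s') :: rest => T s r s' ∧ IsRunRel T s' rest

def TracesRel {S R : Type*} (T : S → R → S → Prop) (S0 : Set S) :
    Set (S × List (R × S)) :=
  {t | t.1 ∈ S0 ∧ IsRunRel T t.1 t.2}

def projState {P V : Type*} (P' : Set P) (s : P → V) : ↥P' → V :=
  fun p => s p.1

open Classical in
/-- Projection on the parametric subtrace: restrict states to `P'` and
delete events whose action type is outside `R'`. -/
noncomputable def projTrace {P V R : Type*} (P' : Set P) (R' : Set R)
    (t : (P → V) × List (R × (P → V))) :
    (↥P' → V) × List (R × (↥P' → V)) :=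
  (projState P' t.1,
    (t.2.filter fun e => decide (e.1 ∈ R')).map fun e => (e.1, projState P' e.2))

def prefOf {S E : Type*} (t : S × List E) (i : ℕ) : S × List E :=
  (t.1, t.2.take i)

def ple {S E : Type*} (u v : S × List E) : Prop :=
  u.1 = v.1 ∧ u.2 <+: v.2

def IsDerivation {Sc Ec Sd Ed : Type*} (S0d : Set Sd)
    (D : Sc × List Ec → Sd × List Ed) (Dom : Set (Sc × List Ec)) : Prop :=
  ∀ tc ∈ Dom, ∃ ch : ℕ → Sc × List Ec,
    ch (D tc).2.length = tc ∧
    (∀ i j, i ≤ j → j ≤ (D tc).2.length → ple (ch i) (ch j)) ∧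
    (∀ i ≤ (D tc).2.length, ch i ∈ Dom ∧ D (ch i) = prefOf (D tc) i) ∧
    (D (ch 0)).1 ∈ S0d

theorem List.exists_monotone_filter_take_eq {α : Type*} (p : α → Bool) :
    ∀ l : List α, ∃ g : ℕ → ℕ, Monotone g ∧
      (∀ i, (l.take (g i)).filter p = (l.filter p).take i) ∧
      l.length ≤ g (l.filter p).length
  | [] => ⟨fun _ => 0, monotone_const, by simp, le_rfl⟩
  | a :: l => by
    obtain ⟨g, hmono, htake, hlen⟩ := List.exists_monotone_filter_take_eq p l
    by_cases ha : p a
    · refine ⟨fun | 0 => 0 | i + 1 => g i + 1, monotone_nat_of_le_succ ?_, ?_, ?_⟩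
      · rintro (_ | i)
        · exact Nat.zero_le _
        · exact Nat.succ_le_succ (hmono i.le_succ)
      · rintro (_ | i)
        · simp
        · simp [List.filter_cons_of_pos ha, htake]
      · simpa [List.filter_cons_of_pos ha] using hlen
    · refine ⟨fun i => g i + 1, fun i j hij => Nat.succ_le_succ (hmono hij), ?_, ?_⟩
      · intro i
        simp [List.filter_cons_of_neg ha, htake]
      · simpa [List.filter_cons_of_neg ha] using hlen

theorem IsRun.take {P V R : Type*} {T : R → (P → V) → (P → V)} :
    ∀ {s : P → V} {l : List (R × (P → V))} (k : ℕ), IsRun T s l → IsRun T s (l.take k)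
  | _, [], _, _ => by simp [IsRun]
  | _, _ :: _, 0, _ => trivial
  | _, _ :: _, _ + 1, ⟨hstep, hrest⟩ => ⟨hstep, hrest.take _⟩

open Classical in
theorem IsRun.projTrace {P V R : Type*} {T : R → (P → V) → (P → V)} {P' : Set P}
    {R' : Set R} {T' : R → (↥P' → V) → (↥P' → V)}
    (hR' : ∀ r ∈ R', ∀ s : P → V, projState P' (T r s) = T' r (projState P' s))
    (hRout : ∀ r ∉ R', ∀ s : P → V, projState P' (T r s) = projState P' s) :
    ∀ {s : P → V} {l : List (R × (P → V))}, IsRun T s l →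
      IsRun T' (projState P' s)
        ((l.filter fun e => decide (e.1 ∈ R')).map fun e => (e.1, projState P' e.2))
  | _, [], _ => trivial
  | s, (r, _) :: _, ⟨rfl, hrest⟩ => by
    by_cases hr : r ∈ R'
    · simpa [hr, IsRun, hR' r hr s] using IsRun.projTrace hR' hRout hrest
    · simpa [hr, hRout r hr s] using IsRun.projTrace hR' hRout hrest

open Classical in
theorem isDerivation_projTrace {P V R : Type*} (T : R → (P → V) → (P → V))
    (S0 : Set (P → V)) (P' : Set P) (R' : Set R) :
    IsDerivation (projState P' '' S0) (projTrace P' R') (Traces T S0) := by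
  rintro ⟨s0, l⟩ ⟨hs0, hrun⟩
  obtain ⟨g, hmono, htake, hlen⟩ :=
    List.exists_monotone_filter_take_eq (fun e => decide (e.1 ∈ R')) l
  refine ⟨fun i => (s0, l.take (g i)), ?_, ?_, ?_, ⟨s0, hs0, rfl⟩⟩
  · simpa [projTrace] using List.take_of_length_le hlen
  · exact fun i j hij _ => ⟨rfl, List.take_prefix_take_left (hmono hij)⟩
  · intro i _
    refine ⟨⟨hs0, hrun.take _⟩, ?_⟩
    simp only [projTrace, prefOf, htake, List.map_take]

/-- The map on traces induced by a simulation with state map `d` and action map `h`. -/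
def simMap {S Sd R Rd : Type*} (d : S → Sd) (h : R → Rd) (u : S × List (R × S)) :
    Sd × List (Rd × Sd) :=
  (d u.1, u.2.map fun e => (h e.1, d e.2))

theorem simMap_prefOf {S Sd R Rd : Type*} (d : S → Sd) (h : R → Rd)
    (u : S × List (R × S)) (i : ℕ) : simMap d h (prefOf u i) = prefOf (simMap d h u) i := by
  simp only [simMap, prefOf, List.map_take]

theorem length_simMap {S Sd R Rd : Type*} (d : S → Sd) (h : R → Rd)
    (u : S × List (R × S)) : (simMap d h u).2.length = u.2.length :=
  List.length_map _

theorem IsRun.isRunRel_simMap {P V R Sd Rd : Type*} {T : R → (P → V) → (P → V)}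
    {Td : Sd → Rd → Sd → Prop} {h : R → Rd} {d : (P → V) → Sd} {R' : Set R}
    (hsim : ∀ r ∈ R', ∀ s : P → V, Td (d s) (h r) (d (T r s))) :
    ∀ {s : P → V} {l : List (R × (P → V))}, IsRun T s l → (∀ e ∈ l, e.1 ∈ R') →
      IsRunRel Td (d s) (simMap d h (s, l)).2
  | _, [], _, _ => trivial
  | s, (r, _) :: _, ⟨rfl, hrest⟩, hmem => by
    refine ⟨hsim r (hmem _ List.mem_cons_self) s, ?_⟩
    exact hrest.isRunRel_simMap hsim fun e he => hmem e (List.mem_cons_of_mem _ he)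

theorem IsDerivation.comp {Sc Ec S E Sd Ed : Type*} {S0 : Set S} {S0d : Set Sd}
    {D : Sc × List Ec → S × List E} {D' : S × List E → Sd × List Ed}
    {Dom : Set (Sc × List Ec)} (hD : IsDerivation S0 D Dom)
    (hlen : ∀ u, (D' u).2.length = u.2.length)
    (hpref : ∀ u i, D' (prefOf u i) = prefOf (D' u) i)
    (hinit : ∀ u, u.1 ∈ S0 → (D' u).1 ∈ S0d) :
    IsDerivation S0d (D' ∘ D) Dom := by
  intro tc htc
  obtain ⟨ch, hlast, hchain, hmem, hch0⟩ := hD tc htc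
  simp only [Function.comp_apply, hlen]
  refine ⟨ch, hlast, hchain, fun i hi => ?_, hinit _ hch0⟩
  obtain ⟨hdom, hD⟩ := hmem i hi
  exact ⟨hdom, by rw [hD, hpref]⟩

open Classical in
theorem subtrace_simulable_gives_derivation_field_general {P V R : Type*} {Sd Rd : Type*}
    (T : R → (P → V) → (P → V)) (S0 : Set (P → V))
    (P' : Set P) (R' : Set R)
    (T' : R → (↥P' → V) → (↥P' → V))
    (hR' : ∀ r ∈ R', ∀ s : P → V, projState P' (T r s) = T' r (projState P' s))
    (hRout : ∀ r ∉ R', ∀ s : P → V, projState P' (T r s) = projState P' s)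
    (Td : Sd → Rd → Sd → Prop) (S0d : Set Sd)
    (h : R → Rd)
    (d : (↥P' → V) → Sd)
    (hd0 : ∀ s0 ∈ S0, d (projState P' s0) ∈ S0d)
    (hsim : ∀ r ∈ R', ∀ s : ↥P' → V, Td (d s) (h r) (d (T' r s))) :
    IsDerivation S0d
      (fun t => ((fun u : (↥P' → V) × List (R × (↥P' → V)) =>
          (d u.1, u.2.map fun e => (h e.1, d e.2))) (projTrace P' R' t)))
      (Traces T S0) ∧
    (∀ t ∈ Traces T S0,
      ((fun u : (↥P' → V) × List (R × (↥P' → V)) =>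
          (d u.1, u.2.map fun e => (h e.1, d e.2))) (projTrace P' R' t))
        ∈ TracesRel Td S0d) := by
  have hinit : ∀ u : (↥P' → V) × List (R × (↥P' → V)),
      u.1 ∈ projState P' '' S0 → (simMap d h u).1 ∈ S0d := by
    rintro u ⟨s0, hs0, hu⟩
    rw [simMap, ← hu]
    exact hd0 s0 hs0
  refine ⟨(isDerivation_projTrace T S0 P' R').comp (D' := simMap d h) (length_simMap d h)
    (simMap_prefOf d h) hinit, fun t ⟨hs0, hrun⟩ => ⟨hd0 t.1 hs0, ?_⟩⟩
  have hmem : ∀ e ∈ (projTrace P' R' t).2, e.1 ∈ R' := by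
    intro e he
    obtain ⟨e', he', rfl⟩ := List.mem_map.mp he
    simpa using (List.mem_filter.mp he').2
  exact (hrun.projTrace hR' hRout).isRunRel_simMap hsim hmem

/-- Corollary: if a parametric subtrace `𝒯''` of `𝒯` (given by `P'`, `R'`,
`T'`) is simulable in `𝒯'` (given by `Td`, `S0d`, via the bijection `h`
between `R'` and the action types of `𝒯'` and the state map `d`), then the
composition of the subtrace projection with the simulation-induced map is a
derivation from `Pref(𝒯)` to `Pref(𝒯')`: `𝒯'` is a derivation field for `𝒯`. -/
theorem subtrace_simulable_gives_derivation_field {P V R : Type*} {Sd Rd : Type*}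
    (T : R → (P → V) → (P → V)) (S0 : Set (P → V))
    (P' : Set P) (R' : Set R)
    (T' : R → (↥P' → V) → (↥P' → V))
    (hR' : ∀ r ∈ R', ∀ s : P → V, projState P' (T r s) = T' r (projState P' s))
    (hRout : ∀ r ∉ R', ∀ s : P → V, projState P' (T r s) = projState P' s)
    (Td : Sd → Rd → Sd → Prop) (S0d : Set Sd)
    (h : R → Rd) (hbij : Set.BijOn h R' Set.univ)
    (d : (↥P' → V) → Sd)
    (hd0 : ∀ s0 ∈ S0, d (projState P' s0) ∈ S0d)
    (hsim : ∀ r ∈ R', ∀ s : ↥P' → V, Td (d s) (h r) (d (T' r s))) :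
    IsDerivation S0d
      (fun t => ((fun u : (↥P' → V) × List (R × (↥P' → V)) =>
          (d u.1, u.2.map fun e => (h e.1, d e.2))) (projTrace P' R' t)))
      (Traces T S0) ∧
    (∀ t ∈ Traces T S0,
      ((fun u : (↥P' → V) × List (R × (↥P' → V)) =>
          (d u.1, u.2.map fun e => (h e.1, d e.2))) (projTrace P' R' t))
        ∈ TracesRel Td S0d) :=
  subtrace_simulable_gives_derivation_field_general T S0 P' R' T' hR' hRout Td S0d h d hd0 hsim
end

section
/- In a transition system where each action type modifies only parameters in a set mod(r) and reads only parameters in use(r), if P' is a set of parameters closed under dependency (no parameter of P' depends on a parameter outside P') and R' = { r ∈ R : mod(r) ∪ use(r) ⊆ P' } with mod(r) ∩ P' = ∅ for all r ∉ R', then for any trace of the full system, the restriction of every state to P' changes only at events whose action type lies in R', and the restricted transitions agree with the restricted transition function T'. -/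
/-- Along a run, the restriction of the states to `P'` changes only at
events whose action type lies in `R'`, and there it follows `T'`. -/
def RestrictionAgrees {P V R : Type*} (P' : Set P) (R' : Set R)
    (T' : R → (↥P' → V) → (↥P' → V)) :
    (P → V) → List (R × (P → V)) → Prop
  | _, [] => True
  | s, (r, s') :: rest =>
      ((r ∉ R' → projState P' s' = projState P' s) ∧
       (r ∈ R' → projState P' s' = T' r (projState P' s))) ∧
      RestrictionAgrees P' R' T' s' rest

/-- In a transition system where each action `r` modifies only the
parameters in `mod r` and reads only those in `use r`, if `P'` is closed
under dependency and `R' = {r | mod r ∪ use r ⊆ P'}` with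
`mod r ∩ P' = ∅` for `r ∉ R'`, then along every trace of the full system
the `P'`-restriction of the states changes only at events of `R'`, where
it follows the restricted transition function `T'`. -/
theorem restriction_changes_only_on_R' {P V R : Type*}
    (T : R → (P → V) → (P → V))
    (mod use : R → Set P)
    (hmod : ∀ (r : R) (s : P → V) (p : P), p ∉ mod r → T r s p = s p)
    (huse : ∀ (r : R) (s s' : P → V) (p : P), p ∈ mod r →
      (∀ q ∈ use r, s q = s' q) → T r s p = T r s' p)
    (P' : Set P)
    (hclosed : ∀ (r : R) (p : P), p ∈ P' → p ∈ mod r → ∀ q ∈ use r, q ∈ P')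
    (R' : Set R) (hR' : R' = {r | mod r ∪ use r ⊆ P'})
    (hout : ∀ r ∉ R', mod r ∩ P' = ∅)
    (T' : R → (↥P' → V) → (↥P' → V))
    (hT' : ∀ r ∈ R', ∀ s : P → V, T' r (projState P' s) = projState P' (T r s)) :
    ∀ (s : P → V) (evs : List (R × (P → V))),
      IsRun T s evs → RestrictionAgrees P' R' T' s evs := by
  intro s evs
  induction evs generalizing s with
  | nil => intro _; trivial
  | cons ev rest ih =>
    obtain ⟨r, s'⟩ := ev
    rintro ⟨hstep, hrun⟩
    refine ⟨⟨?_, ?_⟩, ih s' hrun⟩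
    · intro hr
      funext p
      have hp : p.1 ∉ mod r := by
        intro hmem
        have := hout r hr
        exact absurd (Set.mem_inter hmem p.2) (by simp [this])
      simp [projState, ← hstep, hmod r s p.1 hp]
    · intro hr
      rw [hT' r hr s, hstep]
end
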